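/- arXiv:2211.05454 — 2 statements merged into one kernel-verified Lean document; each statement's English description precedes it below -/
import Mathlib

section
/- Let m₁, m₂ be positive integers with m₁ + m₂ < n. For any β ∈ M_{m₁,m₂}(ℝ), the action of G = SL_n(ℝ) on S(β) given by g(x,y) := (gx, g^{−T}y) is transitive: for any two elements p, p' ∈ S(β) there exists g ∈ G with gp = p'. -/
/- Common setup: the space `X_n = SL_n(ℝ)/SL_n(ℤ)` of unimodular lattices in `ℝⁿ`,
rank conditions, the sets `A_{k,m}` of representatives, the weights `W(β)`,
and the measures `η_β` on the submanifolds `S(β)`. -/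

noncomputable section
open MeasureTheory Matrix Filter Topology
open scoped ENNReal Classical

namespace Paper

/-- Lebesgue measure on the space of real `n × m` matrices. -/
instance matMeasureSpace (n m : ℕ) : MeasureSpace (Matrix (Fin n) (Fin m) ℝ) :=
  inferInstanceAs (MeasureSpace (Fin n → Fin m → ℝ))

/-- cast an integer matrix to a real matrix. -/
def intCast {k m : ℕ} (B : Matrix (Fin k) (Fin m) ℤ) : Matrix (Fin k) (Fin m) ℝ :=
  B.map fun z : ℤ => (z : ℝ)

/-- `d(x) = √(det(xᵀx))`, the volume of the parallelotope spanned by the columns of `x`. -/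
def dd {n m : ℕ} (x : Matrix (Fin n) (Fin m) ℝ) : ℝ := Real.sqrt (xᵀ * x).det

/-- `U_m`: real `n × m` matrices of full rank `m`. -/
def Uset (n m : ℕ) : Set (Matrix (Fin n) (Fin m) ℝ) := {x | 0 < dd x}

/-- `S(β) = {⟨x,y⟩ ∈ U_{m₁} × U_{m₂} : xᵀ y = β}`. -/
def Sset (n m₁ m₂ : ℕ) (β : Matrix (Fin m₁) (Fin m₂) ℝ) :
    Set (Matrix (Fin n) (Fin m₁) ℝ × Matrix (Fin n) (Fin m₂) ℝ) :=
  {p | p.1 ∈ Uset n m₁ ∧ p.2 ∈ Uset n m₂ ∧ p.1ᵀ * p.2 = β}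

/-- matrices as a Euclidean space (entrywise ℓ²-structure). -/
def matToEuc (n m : ℕ) : Matrix (Fin n) (Fin m) ℝ ≃ₗ[ℝ] EuclideanSpace ℝ (Fin n × Fin m) where
  toFun M := (WithLp.equiv 2 _).symm fun p => M p.1 p.2
  invFun f := Matrix.of fun i j => f (i, j)
  map_add' := by intros; rfl
  map_smul' := by intros; rfl
  left_inv := fun M => rfl
  right_inv := fun f => rfl

/-- left multiplication by a fixed matrix, as a linear map. -/
def mulLeftLin {n m₁ m₂ : ℕ} (A : Matrix (Fin m₁) (Fin n) ℝ) :
    Matrix (Fin n) (Fin m₂) ℝ →ₗ[ℝ] Matrix (Fin m₁) (Fin m₂) ℝ where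
  toFun Y := A * Y
  map_add' := fun Y Z => Matrix.mul_add A Y Z
  map_smul' := fun c Y => by simp [Matrix.mul_smul]

/-- `(x^⊥)^{m₂}`: the space of `n × m₂` matrices `y` with `xᵀy = 0`,
viewed inside the Euclidean space of matrices. -/
def kerSubmodule (n m₁ m₂ : ℕ) (x : Matrix (Fin n) (Fin m₁) ℝ) :
    Submodule ℝ (EuclideanSpace ℝ (Fin n × Fin m₂)) :=
  Submodule.map (matToEuc n m₂).toLinearMap
    (LinearMap.ker (mulLeftLin (n := n) (m₁ := m₁) (m₂ := m₂) xᵀ))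

/-- `η_{β,x}`: the Lebesgue volume measure on the affine subspace
`S(β)'_x = {y : xᵀ y = β}` of `M_{n,m₂}(ℝ)` (with its Euclidean structure),
obtained as the Euclidean volume on `(x^⊥)^{m₂}` translated by `x(xᵀx)⁻¹β ∈ S(β)'_x`. -/
def etaFiber (n m₁ m₂ : ℕ) (x : Matrix (Fin n) (Fin m₁) ℝ) (β : Matrix (Fin m₁) (Fin m₂) ℝ) :
    Measure (Matrix (Fin n) (Fin m₂) ℝ) :=
  Measure.map (fun k : kerSubmodule n m₁ m₂ x =>
    x * (xᵀ * x)⁻¹ * β + (matToEuc n m₂).symm k.1) volume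

/-- the measure `η_β` on `S(β)` (as a measure on the ambient product of matrix spaces):
`η_β(E) = ∫_{U_{m₁}} ∫_{S(β)_x} χ_E(x,y) dη_{β,x}(y) d(x)^{-m₂} dx`. -/
def eta (n m₁ m₂ : ℕ) (β : Matrix (Fin m₁) (Fin m₂) ℝ) :
    Measure (Matrix (Fin n) (Fin m₁) ℝ × Matrix (Fin n) (Fin m₂) ℝ) :=
  Measure.bind
    ((volume.restrict (Uset n m₁)).withDensity fun x => ENNReal.ofReal ((dd x ^ m₂)⁻¹))
    (fun x => Measure.map (fun y => (x, y)) ((etaFiber n m₁ m₂ x β).restrict (Uset n m₂)))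

/-- `G = SL_n(ℝ)`. -/
abbrev SLR (n : ℕ) := Matrix.SpecialLinearGroup (Fin n) ℝ

instance (n : ℕ) : MeasurableSpace (SLR n) :=
  inferInstanceAs (MeasurableSpace {A : Matrix (Fin n) (Fin n) ℝ // A.det = 1})

/-- `Γ = SL_n(ℤ)` as a subgroup of `SL_n(ℝ)`. -/
def SLZ (n : ℕ) : Subgroup (SLR n) :=
  (Matrix.SpecialLinearGroup.map (n := Fin n) (Int.castRingHom ℝ)).range

/-- the space `X_n = SL_n(ℝ)/SL_n(ℤ)` of unimodular lattices in `ℝⁿ`;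
the coset of `g` corresponds to the lattice `gℤⁿ`, whose dual lattice is `g^{-T}ℤⁿ`. -/
abbrev XSpace (n : ℕ) := SLR n ⧸ SLZ n

/-- `g^{-T} = (g⁻¹)ᵀ`, the matrix mapping `ℤⁿ` onto the dual lattice of `gℤⁿ`. -/
def dualMat {n : ℕ} (g : SLR n) : Matrix (Fin n) (Fin n) ℝ :=
  ((g⁻¹ : SLR n) : Matrix (Fin n) (Fin n) ℝ)ᵀ

/-- the Riemann zeta value `ζ(s)` for an integer `s`. -/
def zetaN (s : ℕ) : ℝ := ∑' k : ℕ+, ((k : ℝ) ^ s)⁻¹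

/-- the set `𝔚_m` of upper triangular integer matrices with positive diagonal entries
and `0 ≤ a_{ij} < a_{jj}` for `i < j`. -/
def HermiteSet (m : ℕ) : Set (Matrix (Fin m) (Fin m) ℤ) :=
  {A | (∀ i j : Fin m, j < i → A i j = 0) ∧ (∀ i, 0 < A i i) ∧
    ∀ i j : Fin m, i < j → 0 ≤ A i j ∧ A i j < A j j}

/-- `𝔚_β = {A ∈ 𝔚_{m₁} : A^{-T} β ∈ M_{m₁,m₂}(ℤ)}` (note `A^{-T}β ∈ M_{m₁,m₂}(ℤ)` iff
`β = Aᵀ C` for some integer matrix `C`). -/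
def WSet (m₁ m₂ : ℕ) (β : Matrix (Fin m₁) (Fin m₂) ℤ) : Set (Matrix (Fin m₁) (Fin m₁) ℤ) :=
  {A | A ∈ HermiteSet m₁ ∧ ∃ C : Matrix (Fin m₁) (Fin m₂) ℤ, Aᵀ * C = β}

/-- the weight `W(β) = (Σ_{A ∈ 𝔚_β} (det A)^{m₂-n}) / (ζ(n)ζ(n-1)⋯ζ(n-m₁+1))`. -/
def WeightW (n m₁ m₂ : ℕ) (β : Matrix (Fin m₁) (Fin m₂) ℤ) : ℝ :=
  (∑' A : WSet m₁ m₂ β, ((A.1.det : ℝ) ^ ((m₂ : ℤ) - n))) /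
    ∏ j ∈ Finset.range m₁, zetaN (n - j)

/-- `M_{k,m}(ℤ)*`: integer matrices `B` of full rank `m` with `V_B ∩ ℤ^k = Bℤ^m`. -/
def MZstar (k m : ℕ) : Set (Matrix (Fin k) (Fin m) ℤ) :=
  {B | 0 < dd (intCast B) ∧
    ∀ v : Fin k → ℤ, (∃ c : Fin m → ℝ, (fun i => (v i : ℝ)) = (intCast B).mulVec c) →
      ∃ u : Fin m → ℤ, v = B.mulVec u}

/-- `A` is a valid choice of the set `A_{k,m}` of representatives: it contains exactly one
element of each orbit of the right `GL_m(ℤ)`-action on `M_{k,m}(ℤ)*`. -/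
def IsRepSet (k m : ℕ) (A : Set (Matrix (Fin k) (Fin m) ℤ)) : Prop :=
  A ⊆ MZstar k m ∧ ∀ B ∈ MZstar k m, ∃! B' : Matrix (Fin k) (Fin m) ℤ,
    B' ∈ A ∧ ∃ γ : (Matrix (Fin m) (Fin m) ℤ)ˣ, B * (γ : Matrix (Fin m) (Fin m) ℤ) = B'

/-- a primitive `m`-tuple in `ℤⁿ` (for `m ≤ n`): an `n × m` integer matrix whose columns
can be extended to a `ℤ`-basis of `ℤⁿ`, i.e. which forms the first `m` columns of some
matrix in `GL_n(ℤ)`. Correspondingly, `x = gξ` with `ξ` primitive are exactly the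
primitive `m`-tuples of the lattice `gℤⁿ`. -/
def PrimTuple {n m : ℕ} (ξ : Matrix (Fin n) (Fin m) ℤ) : Prop :=
  ∃ γ : (Matrix (Fin n) (Fin n) ℤ)ˣ,
    ∀ (i : Fin n) (j : Fin m) (hj : (j : ℕ) < n),
      (γ : Matrix (Fin n) (Fin n) ℤ) i ⟨(j : ℕ), hj⟩ = ξ i j

/-- the volume `𝔙_d` of the unit ball in `ℝ^d`. -/
def ballVol (d : ℕ) : ℝ := Real.pi ^ ((d : ℝ) / 2) / Real.Gamma ((d : ℝ) / 2 + 1)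

/-- the Euclidean norm on `ℝⁿ`. -/
def eNorm {n : ℕ} (v : Fin n → ℝ) : ℝ := Real.sqrt (∑ i, v i ^ 2)




/-- there is an injective linear map between finite-dimensional spaces of
nondecreasing dimension. -/
lemma exists_injective_linearMap (M N : Type*) [AddCommGroup M] [Module ℝ M]
    [AddCommGroup N] [Module ℝ N] [FiniteDimensional ℝ M] [FiniteDimensional ℝ N]
    (h : Module.finrank ℝ M ≤ Module.finrank ℝ N) :
    ∃ ψ : M →ₗ[ℝ] N, Function.Injective ψ := by
  classical
  set bM := Module.finBasis ℝ M
  set bN := Module.finBasis ℝ N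
  have hv : LinearIndependent ℝ (fun i => bN (Fin.castLE h i)) :=
    bN.linearIndependent.comp _ (Fin.castLE_injective h)
  refine ⟨bM.constr ℝ (fun i => bN (Fin.castLE h i)), ?_⟩
  rw [← LinearMap.ker_eq_bot, LinearMap.ker_eq_bot']
  intro x hx
  rw [Module.Basis.constr_apply_fintype] at hx
  have hz := Fintype.linearIndependent_iff.mp hv (fun i => bM.equivFun x i) hx
  have : bM.equivFun x = 0 := funext hz
  have := bM.equivFun.injective (by simpa using this)
  simpa using this

/-- key perturbation lemma: if `ker P ⊓ ker R = ⊥` and `range P ≤ K` with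
`m₁ ≤ dim K`, one can correct `P` by a map through `R` with range in `K`
to make it injective. -/
lemma exists_phi {m₁ m₂ n : ℕ}
    (P : (Fin m₁ → ℝ) →ₗ[ℝ] (Fin n → ℝ)) (R : (Fin m₁ → ℝ) →ₗ[ℝ] (Fin m₂ → ℝ))
    (K : Submodule ℝ (Fin n → ℝ)) (hPK : ∀ a, P a ∈ K)
    (hker : ∀ a, P a = 0 → R a = 0 → a = 0)
    (hK : m₁ ≤ Module.finrank ℝ K) :
    ∃ φ : (Fin m₂ → ℝ) →ₗ[ℝ] (Fin n → ℝ), (∀ v, φ v ∈ K) ∧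
      Function.Injective ⇑(P + φ ∘ₗ R) := by
  classical
  set s := LinearMap.ker P with hs
  set s' := s.map R with hs'
  obtain ⟨T, hT⟩ := Submodule.exists_isCompl s'
  set P₀ := P.codRestrict K hPK with hP₀
  obtain ⟨C₀, hC₀⟩ := Submodule.exists_isCompl (LinearMap.range P₀)
  have hrn : Module.finrank ℝ (LinearMap.range P₀) + Module.finrank ℝ s = m₁ := by
    have h1 := LinearMap.finrank_range_add_finrank_ker P₀
    rw [LinearMap.ker_codRestrict] at h1
    simpa [Module.finrank_fin_fun] using h1
  have hcompl : Module.finrank ℝ (LinearMap.range P₀) + Module.finrank ℝ C₀ =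
      Module.finrank ℝ K := Submodule.finrank_add_eq_of_isCompl hC₀
  have hs'le : Module.finrank ℝ s' ≤ Module.finrank ℝ s := Submodule.finrank_map_le R s
  have hdim : Module.finrank ℝ s' ≤ Module.finrank ℝ C₀ := by omega
  obtain ⟨ψ, hψ⟩ := exists_injective_linearMap s' C₀ hdim
  set pr := s'.linearProjOfIsCompl T hT with hpr
  refine ⟨K.subtype ∘ₗ C₀.subtype ∘ₗ ψ ∘ₗ pr, fun v => by simp, ?_⟩
  rw [← LinearMap.ker_eq_bot, LinearMap.ker_eq_bot']
  intro a ha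
  simp only [LinearMap.add_apply, LinearMap.comp_apply] at ha
  -- move to `K`
  have haK : P₀ a + (C₀.subtype (ψ (pr (R a)))) = 0 := by
    apply Subtype.ext
    simpa [hP₀] using ha
  have hmem : P₀ a ∈ C₀ := by
    have : P₀ a = -(C₀.subtype (ψ (pr (R a)))) := by
      rw [eq_neg_iff_add_eq_zero]; exact haK
    rw [this]
    exact C₀.neg_mem (SetLike.coe_mem _)
  have hP₀a : P₀ a = 0 :=
    Submodule.disjoint_def.mp hC₀.disjoint _ (LinearMap.mem_range_self P₀ a) hmem
  have hPa : P a = 0 := by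
    have h0 : ((P₀ a : K) : Fin n → ℝ) = P a := rfl
    rw [← h0, hP₀a]; simp
  have hz : C₀.subtype (ψ (pr (R a))) = 0 := by rw [← haK, hP₀a, zero_add]
  have hψ0 : ψ (pr (R a)) = 0 := Subtype.ext (by simpa using hz)
  have hpr0 : pr (R a) = 0 := hψ (by simpa using hψ0)
  have hRs' : R a ∈ s' := Submodule.mem_map_of_mem (by simpa [hs, LinearMap.mem_ker] using hPa)
  have : pr (R a) = ⟨R a, hRs'⟩ := Submodule.linearProjOfIsCompl_apply_left hT ⟨R a, hRs'⟩
  have hRa : R a = 0 := by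
    have := this.symm.trans hpr0
    simpa using congrArg (Subtype.val) this
  exact hker a hPa hRa


set_option maxHeartbeats 1000000 in
set_option synthInstance.maxHeartbeats 1000000 in
/-- given an injective `f` and a split surjection `t` with `m₁ + m₂ ≤ n`, there is a
linearly independent family spanning `ℝⁿ` whose first `m₁` vectors are the images of the
standard basis under `f` and whose remaining vectors have prescribed images under `t`. -/
lemma exists_adapted_family {n m₁ m₂ : ℕ} (hn : m₁ + m₂ ≤ n)
    (f : (Fin m₁ → ℝ) →ₗ[ℝ] (Fin n → ℝ)) (hf : Function.Injective f)
    (t : (Fin n → ℝ) →ₗ[ℝ] (Fin m₂ → ℝ)) (c : (Fin m₂ → ℝ) →ₗ[ℝ] (Fin n → ℝ))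
    (htc : ∀ v, t (c v) = v) :
    ∃ b : Fin n → (Fin n → ℝ), LinearIndependent ℝ b ∧
      (∀ (j : Fin n) (hj : (j : ℕ) < m₁), b j = f (Pi.single ⟨j, hj⟩ 1)) ∧
      (∀ (j : Fin n) (h1 : m₁ ≤ (j : ℕ)) (h2 : (j : ℕ) < m₁ + m₂),
        t (b j) = Pi.single (⟨(j : ℕ) - m₁, by omega⟩ : Fin m₂) 1) ∧
      (∀ j : Fin n, m₁ + m₂ ≤ (j : ℕ) → t (b j) = 0) := by
  classical
  have hps : ∀ (m : ℕ) (i : Fin m), (Pi.single i 1 : Fin m → ℝ) = fun j => if i = j then 1 else 0 := by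
    intro m i; ext j; simp [Pi.single_apply, eq_comm]
  set K := LinearMap.ker t with hK
  have hts : Function.Surjective t := fun v => ⟨c v, htc v⟩
  have hKrank : Module.finrank ℝ K = n - m₂ := by
    have h1 := LinearMap.finrank_range_add_finrank_ker t
    have h2 : LinearMap.range t = ⊤ := LinearMap.range_eq_top.mpr hts
    rw [h2, finrank_top] at h1
    simp only [Module.finrank_fin_fun] at h1
    rw [← hK] at h1
    omega
  set R := t ∘ₗ f with hR
  set P := f - c ∘ₗ R with hP
  have hPapp : ∀ a, P a = f a - c (t (f a)) := fun a => rfl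
  have hRapp : ∀ a, R a = t (f a) := fun a => rfl
  have hPK : ∀ a, P a ∈ K := by
    intro a
    simp [hK, LinearMap.mem_ker, hPapp, htc]
  have hker : ∀ a, P a = 0 → R a = 0 → a = 0 := by
    intro a h1 h2
    have hRa : t (f a) = 0 := h2
    have hfa : f a = 0 := by
      have h3 := hPapp a
      rw [h1, hRa, map_zero, sub_zero] at h3
      exact h3.symm
    exact hf (by simpa using hfa)
  obtain ⟨φ, hφK, hφinj⟩ := exists_phi P R K hPK hker (le_trans (by omega) (le_of_eq hKrank.symm))
  have htφ : ∀ v, t (φ v) = 0 := by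
    intro v
    have := hφK v
    simpa [hK, LinearMap.mem_ker] using this
  set M := P + φ ∘ₗ R with hM
  have hMapp : ∀ a, M a = P a + φ (R a) := fun a => rfl
  have hMK : ∀ a, M a ∈ K := fun a => K.add_mem (hPK a) (hφK _)
  clear_value K R P M
  have hrangeK : LinearMap.range M ≤ K := by
    rintro x ⟨a, rfl⟩
    exact hMK a
  obtain ⟨W, hW⟩ := Submodule.exists_isCompl (LinearMap.range M)
  set C' := W ⊓ K with hC'
  have hC'K : C' ≤ K := inf_le_right
  have hdisj : Disjoint (LinearMap.range M) C' := hW.disjoint.mono_right inf_le_left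
  have hsup : LinearMap.range M ⊔ C' = K := by
    apply le_antisymm (sup_le hrangeK inf_le_right)
    intro x hxK
    have hx : x ∈ LinearMap.range M ⊔ W := by
      rw [hW.codisjoint.eq_top]
      trivial
    obtain ⟨m, hm, w', hw', rfl⟩ := Submodule.mem_sup.mp hx
    have hw'K : w' ∈ K := by
      have h3 := K.sub_mem hxK (hrangeK hm)
      simpa using h3
    exact Submodule.mem_sup.mpr ⟨m, hm, w', ⟨hw', hw'K⟩, rfl⟩
  set q := n - (m₁ + m₂) with hq
  have hrrank : Module.finrank ℝ (LinearMap.range M) = m₁ := by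
    rw [LinearMap.finrank_range_of_inj hφinj]
    simp [Module.finrank_fin_fun]
  have hC'rank : Module.finrank ℝ C' = q := by
    have h1 := Submodule.finrank_sup_add_finrank_inf_eq (LinearMap.range M) C'
    rw [hsup, hdisj.eq_bot, hrrank, hKrank] at h1
    simp only [finrank_bot] at h1
    omega
  clear_value q
  haveI instC : FiniteDimensional ℝ C' := FiniteDimensional.finiteDimensional_submodule C'
  set w : Fin q → C' := fun k => (Module.finBasis ℝ C') (finCongr hC'rank.symm k) with hw
  have hwind : LinearIndependent ℝ w :=
    (Module.finBasis ℝ C').linearIndependent.comp _ (finCongr hC'rank.symm).injective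
  clear_value w
  set wV : Fin q → (Fin n → ℝ) := fun k => ((w k : C') : Fin n → ℝ) with hwV
  have hwVC : ∀ k, wV k ∈ C' := fun k => SetLike.coe_mem (w k)
  have hwVK : ∀ k, wV k ∈ K := fun k => hC'K (hwVC k)
  have htwV : ∀ k, t (wV k) = 0 := by
    intro k
    have := hwVK k
    simpa [hK, LinearMap.mem_ker] using this
  have hwVind : LinearIndependent ℝ wV :=
    hwind.map' C'.subtype (Submodule.ker_subtype C')
  -- the family over the sum type
  set v : (Fin m₁ ⊕ (Fin m₂ ⊕ Fin q)) → (Fin n → ℝ) :=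
    Sum.elim (fun j => f (Pi.single j 1))
      (Sum.elim (fun i => c (Pi.single i 1) - φ (Pi.single i 1)) wV) with hv
  have hvind : LinearIndependent ℝ v := by
    rw [Fintype.linearIndependent_iff]
    intro g hg
    set a₁ : Fin m₁ → ℝ := fun j => g (Sum.inl j) with ha₁
    set a₂ : Fin m₂ → ℝ := fun i => g (Sum.inr (Sum.inl i)) with ha₂
    set a₃ : Fin q → ℝ := fun k => g (Sum.inr (Sum.inr k)) with ha₃
    rw [Fintype.sum_sum_type, Fintype.sum_sum_type] at hg
    simp only [hv, Sum.elim_inl, Sum.elim_inr] at hg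
    have e1 : ∑ x : Fin m₁, g (Sum.inl x) • f (Pi.single x 1) = f a₁ := by
      rw [LinearMap.pi_apply_eq_sum_univ f a₁]
      refine Finset.sum_congr rfl (fun x _ => ?_)
      rw [hps]
    have e2 : ∑ x : Fin m₂, g (Sum.inr (Sum.inl x)) •
        (c (Pi.single x 1) - φ (Pi.single x 1)) = c a₂ - φ a₂ := by
      simp only [smul_sub]
      rw [Finset.sum_sub_distrib]
      have e2a : ∑ x : Fin m₂, g (Sum.inr (Sum.inl x)) • c (Pi.single x 1) = c a₂ := by
        rw [LinearMap.pi_apply_eq_sum_univ c a₂]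
        refine Finset.sum_congr rfl (fun x _ => ?_)
        rw [hps]
      have e2b : ∑ x : Fin m₂, g (Sum.inr (Sum.inl x)) • φ (Pi.single x 1) = φ a₂ := by
        rw [LinearMap.pi_apply_eq_sum_univ φ a₂]
        refine Finset.sum_congr rfl (fun x _ => ?_)
        rw [hps]
      rw [e2a, e2b]
    rw [e1, e2, ← add_assoc] at hg
    have hW0 : t (∑ x, g (Sum.inr (Sum.inr x)) • wV x) = 0 := by
      rw [map_sum]
      refine Finset.sum_eq_zero (fun x _ => ?_)
      rw [_root_.map_smul, htwV, smul_zero]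
    have ht0 : R a₁ + a₂ = 0 := by
      have h5 := congrArg t hg
      rw [map_zero, map_add, map_add, map_sub, hW0, htc, htφ, sub_zero, add_zero,
        ← hRapp] at h5
      exact h5
    have ha₂eq : a₂ = -R a₁ := by
      rw [eq_neg_iff_add_eq_zero, add_comm]; exact ht0
    have hsum2 : M a₁ + (∑ x, g (Sum.inr (Sum.inr x)) • wV x) = 0 := by
      have h6 : M a₁ = f a₁ + (c a₂ - φ a₂) := by
        rw [hMapp, hPapp, ← hRapp, ha₂eq, map_neg, map_neg]
        abel
      rw [h6]
      exact hg
    have hSC' : (∑ x, g (Sum.inr (Sum.inr x)) • wV x) ∈ C' :=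
      Submodule.sum_mem _ fun k _ => C'.smul_mem _ (hwVC k)
    have hMmem : M a₁ ∈ C' := by
      have h7 : M a₁ = -(∑ x, g (Sum.inr (Sum.inr x)) • wV x) := by
        rw [eq_neg_iff_add_eq_zero]
        exact hsum2
      rw [h7]
      exact C'.neg_mem hSC'
    have hM0 : M a₁ = 0 :=
      Submodule.disjoint_def.mp hdisj _ (LinearMap.mem_range_self M a₁) hMmem
    have ha₁0 : a₁ = 0 := hφinj (by rw [hM0, map_zero])
    have hS0 : (∑ x, g (Sum.inr (Sum.inr x)) • wV x) = 0 := by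
      have h8 := hsum2
      rw [hM0, zero_add] at h8
      exact h8
    have ha₃0 : ∀ k, a₃ k = 0 :=
      Fintype.linearIndependent_iff.mp hwVind (fun x => g (Sum.inr (Sum.inr x))) hS0
    have ha₂0 : a₂ = 0 := by rw [ha₂eq, ha₁0, map_zero, neg_zero]
    rintro (j | i | k)
    · exact congrFun ha₁0 j
    · exact congrFun ha₂0 i
    · exact ha₃0 k
  -- transport along the index equivalence
  have hn' : n = m₁ + (m₂ + q) := by omega
  set e : (Fin m₁ ⊕ (Fin m₂ ⊕ Fin q)) ≃ Fin n :=
    ((Equiv.sumCongr (Equiv.refl (Fin m₁)) finSumFinEquiv).trans finSumFinEquiv).trans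
      (finCongr hn'.symm) with he
  have heval : ∀ i, ((e i : Fin n) : ℕ) =
      Sum.elim (fun j : Fin m₁ => (j : ℕ))
        (Sum.elim (fun i : Fin m₂ => m₁ + (i : ℕ)) (fun k : Fin q => m₁ + (m₂ + (k : ℕ)))) i := by
    rintro (j | i | k) <;>
      simp [he, Equiv.trans_apply, Equiv.sumCongr_apply, finSumFinEquiv_apply_left,
        finSumFinEquiv_apply_right, finCongr_apply, Fin.coe_cast, Fin.coe_castAdd,
        Fin.coe_natAdd]
  refine ⟨v ∘ e.symm, hvind.comp e.symm e.symm.injective, ?_, ?_, ?_⟩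
  · intro j hj
    have hsymm : e.symm j = Sum.inl ⟨(j : ℕ), hj⟩ := by
      rw [Equiv.symm_apply_eq]
      apply Fin.ext
      rw [heval]
      simp
    simp only [Function.comp_apply, hsymm, hv, Sum.elim_inl]
  · intro j h1 h2
    have hsymm : e.symm j = Sum.inr (Sum.inl ⟨(j : ℕ) - m₁, by omega⟩) := by
      rw [Equiv.symm_apply_eq]
      apply Fin.ext
      rw [heval]
      simp only [Sum.elim_inr, Sum.elim_inl]
      omega
    simp only [Function.comp_apply, hsymm, hv, Sum.elim_inr, Sum.elim_inl]
    rw [map_sub, htc, htφ, sub_zero]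
  · intro j hj
    have hsymm : e.symm j = Sum.inr (Sum.inr ⟨(j : ℕ) - (m₁ + m₂), by omega⟩) := by
      rw [Equiv.symm_apply_eq]
      apply Fin.ext
      rw [heval]
      simp only [Sum.elim_inr]
      omega
    simp only [Function.comp_apply, hsymm, hv, Sum.elim_inr]
    exact htwV _


/-- the canonical full-rank `n × m` matrix: identity on top, zeros below. -/
def canX (n m : ℕ) : Matrix (Fin n) (Fin m) ℝ :=
  Matrix.of fun i j => if (i : ℕ) = (j : ℕ) then 1 else 0

/-- the canonical second component: `β` on top of the identity block, zeros below. -/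
def canY (n m₁ m₂ : ℕ) (β : Matrix (Fin m₁) (Fin m₂) ℝ) : Matrix (Fin n) (Fin m₂) ℝ :=
  Matrix.of fun i j =>
    if h : (i : ℕ) < m₁ then β ⟨(i : ℕ), h⟩ j
    else if (i : ℕ) = m₁ + (j : ℕ) then 1 else 0

/-- a matrix with `d(x) > 0` has invertible Gram matrix and injective column map. -/
lemma dd_pos_facts {n m : ℕ} {x : Matrix (Fin n) (Fin m) ℝ} (hx : 0 < dd x) :
    IsUnit (xᵀ * x).det ∧ Function.Injective x.mulVecLin := by
  have hx' : 0 < Real.sqrt (xᵀ * x).det := hx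
  have hdet : 0 < (xᵀ * x).det := Real.sqrt_pos.mp hx'
  have hu : IsUnit (xᵀ * x).det := isUnit_iff_ne_zero.mpr (ne_of_gt hdet)
  refine ⟨hu, ?_⟩
  rw [← LinearMap.ker_eq_bot, LinearMap.ker_eq_bot']
  intro a ha
  rw [Matrix.mulVecLin_apply] at ha
  have h2 : (xᵀ * x).mulVec a = 0 := by
    rw [← Matrix.mulVec_mulVec, ha, Matrix.mulVec_zero]
  have h3 := congrArg (fun v => ((xᵀ * x)⁻¹).mulVec v) h2
  simpa [Matrix.mulVec_mulVec, Matrix.nonsing_inv_mul _ hu, Matrix.mulVec_zero,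
    Matrix.one_mulVec] using h3

set_option maxHeartbeats 1000000 in
set_option synthInstance.maxHeartbeats 400000 in
/-- the key reduction: every element of `S(β)` can be written as
`(B ⬝ canX, B⁻ᵀ ⬝ canY β)` for an invertible matrix `B`. -/
lemma exists_B {n m₁ m₂ : ℕ} (hn : m₁ + m₂ ≤ n)
    (x : Matrix (Fin n) (Fin m₁) ℝ) (y : Matrix (Fin n) (Fin m₂) ℝ)
    (hx : 0 < dd x) (hy : 0 < dd y) :
    ∃ B : Matrix (Fin n) (Fin n) ℝ, IsUnit B.det ∧
      B * canX n m₁ = x ∧ Bᵀ * y = canY n m₁ m₂ (xᵀ * y) := by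
  classical
  obtain ⟨hux, hfx⟩ := dd_pos_facts hx
  obtain ⟨huy, hfy⟩ := dd_pos_facts hy
  set t : (Fin n → ℝ) →ₗ[ℝ] (Fin m₂ → ℝ) := (yᵀ).mulVecLin with ht
  set cm : (Fin m₂ → ℝ) →ₗ[ℝ] (Fin n → ℝ) := (y * (yᵀ * y)⁻¹).mulVecLin with hcm
  have htc : ∀ v, t (cm v) = v := by
    intro v
    have h1 : yᵀ * (y * (yᵀ * y)⁻¹) = 1 := by
      rw [← Matrix.mul_assoc, Matrix.mul_nonsing_inv _ huy]
    rw [hcm, ht, Matrix.mulVecLin_apply, Matrix.mulVecLin_apply, Matrix.mulVec_mulVec, h1,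
      Matrix.one_mulVec]
  obtain ⟨b, hbind, hb1, hb2, hb3⟩ := exists_adapted_family hn x.mulVecLin hfx t cm htc
  set B : Matrix (Fin n) (Fin n) ℝ := Matrix.of (fun i k => b k i) with hB
  have hBT : ∀ k, Bᵀ k = b k := fun k => rfl
  have hBu : IsUnit B := by
    rw [← Matrix.linearIndependent_cols_iff_isUnit]
    exact hbind
  refine ⟨B, (Matrix.isUnit_iff_isUnit_det B).mp hBu, ?_, ?_⟩
  · ext i j
    have hj : (j : ℕ) < n := lt_of_lt_of_le j.2 (le_trans (Nat.le_add_right _ _) hn)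
    rw [Matrix.mul_apply]
    have hterm : ∀ k : Fin n, B i k * canX n m₁ k j =
        if k = ⟨(j : ℕ), hj⟩ then B i k else 0 := by
      intro k
      simp only [canX, Matrix.of_apply, mul_ite, mul_one, mul_zero, Fin.ext_iff]
    rw [Finset.sum_congr rfl (fun k _ => hterm k), Finset.sum_ite_eq' Finset.univ _ (fun k => B i k)]
    simp only [Finset.mem_univ, if_true]
    have hb := hb1 ⟨(j : ℕ), hj⟩ (by simpa using j.2)
    have : B i ⟨(j : ℕ), hj⟩ = b ⟨(j : ℕ), hj⟩ i := rfl
    rw [this, hb, Matrix.mulVecLin_apply, Matrix.mulVec_single]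
    simp
  · ext k j
    rw [Matrix.mul_apply]
    have hkey : (∑ i, Bᵀ k i * y i j) = t (b k) j := by
      rw [ht, Matrix.mulVecLin_apply]
      simp only [Matrix.mulVec, dotProduct, Matrix.transpose_apply, hBT]
      exact Finset.sum_congr rfl fun i _ => mul_comm _ _
    rw [hkey]
    rcases lt_or_ge (k : ℕ) m₁ with hk1 | hk1
    · rw [hb1 k hk1, ht, Matrix.mulVecLin_apply, Matrix.mulVecLin_apply,
        Matrix.mulVec_mulVec, Matrix.mulVec_single]
      simp only [canY, Matrix.of_apply, hk1, dif_pos, mul_one]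
      simp only [MulOpposite.op_one, one_smul, Matrix.col_apply, Matrix.mul_apply]
      exact Finset.sum_congr rfl fun i _ => by
        simp [Matrix.transpose_apply, mul_comm]
    · rcases lt_or_ge (k : ℕ) (m₁ + m₂) with hk2 | hk2
      · rw [hb2 k hk1 hk2]
        have hiff : ((j : ℕ) = (k : ℕ) - m₁) ↔ ((k : ℕ) = m₁ + (j : ℕ)) := by omega
        simp only [canY, Matrix.of_apply, Pi.single_apply, Fin.ext_iff, dif_neg (not_lt.mpr hk1)]
        simp only [hiff]
      · rw [hb3 k hk2]
        have h1 : ¬ ((k : ℕ) < m₁) := by omega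
        have h2 : ¬ ((k : ℕ) = m₁ + (j : ℕ)) := by have := j.2; omega
        simp [canY, h1, h2]

/-- **Lemma `GtransitiveonSbetaLEM`**: for positive integers `m₁, m₂` with `m₁ + m₂ < n`
and any `β ∈ M_{m₁,m₂}(ℝ)`, the action `g⟨x,y⟩ = ⟨gx, g^{-T}y⟩` of `G = SL_n(ℝ)` on `S(β)`
is transitive. -/
theorem G_transitive_on_S_beta
    (n m₁ m₂ : ℕ) (hm₁ : 0 < m₁) (hm₂ : 0 < m₂) (hn : m₁ + m₂ < n)
    (β : Matrix (Fin m₁) (Fin m₂) ℝ)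
    (p p' : Matrix (Fin n) (Fin m₁) ℝ × Matrix (Fin n) (Fin m₂) ℝ)
    (hp : p ∈ Sset n m₁ m₂ β) (hp' : p' ∈ Sset n m₁ m₂ β) :
    ∃ g : SLR n,
      ((g : Matrix (Fin n) (Fin n) ℝ) * p.1, dualMat g * p.2) = p' := by
  classical
  obtain ⟨x, y⟩ := p
  obtain ⟨x', y'⟩ := p'
  obtain ⟨hx, hy, hβ⟩ := hp
  obtain ⟨hx', hy', hβ'⟩ := hp'
  obtain ⟨B, hBu, hB1, hB2⟩ := exists_B (le_of_lt hn) x y hx hy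
  obtain ⟨B', hB'u, hB'1, hB'2⟩ := exists_B (le_of_lt hn) x' y' hx' hy'
  rw [show xᵀ * y = β from hβ] at hB2
  rw [show x'ᵀ * y' = β from hβ'] at hB'2
  have hBne : B.det ≠ 0 := hBu.ne_zero
  have hB'ne : B'.det ≠ 0 := hB'u.ne_zero
  set lam : ℝ := B.det / B'.det with hlamdef
  have hlam : lam ≠ 0 := div_ne_zero hBne hB'ne
  set d : Fin n → ℝ := fun i => if (i : ℕ) = n - 1 then lam else 1 with hd
  set d' : Fin n → ℝ := fun i => if (i : ℕ) = n - 1 then lam⁻¹ else 1 with hd'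
  set D := Matrix.diagonal d with hD
  set D' := Matrix.diagonal d' with hD'
  have hn0 : 0 < n := by omega
  have hDdet : D.det = lam := by
    rw [hD, Matrix.det_diagonal]
    have hterm : ∀ i : Fin n, d i = if i = ⟨n - 1, by omega⟩ then lam else 1 := by
      intro i
      simp only [hd, Fin.ext_iff]
    rw [Finset.prod_congr rfl (fun i _ => hterm i),
      Finset.prod_ite_eq' Finset.univ _ (fun _ => lam)]
    simp
  have hDD' : D * D' = 1 := by
    rw [hD, hD', Matrix.diagonal_mul_diagonal]
    have hone : (fun i => d i * d' i) = fun _ => (1 : ℝ) := by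
      funext i
      simp only [hd, hd']
      by_cases hi : (i : ℕ) = n - 1
      · simp [hi, mul_inv_cancel₀ hlam]
      · simp [hi]
    rw [hone]
    exact Matrix.diagonal_one
  have hGdet : (B' * D * B⁻¹).det = 1 := by
    rw [Matrix.det_mul, Matrix.det_mul, Matrix.det_nonsing_inv, hDdet, hlamdef,
      Ring.inverse_eq_inv']
    field_simp
  set g : SLR n := ⟨B' * D * B⁻¹, hGdet⟩ with hg
  have hcoe : (g : Matrix (Fin n) (Fin n) ℝ) = B' * D * B⁻¹ := rfl
  refine ⟨g, ?_⟩
  have hfst : (g : Matrix (Fin n) (Fin n) ℝ) * x = x' := by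
    rw [hcoe]
    have h1 : B⁻¹ * x = canX n m₁ := by
      rw [← hB1, ← Matrix.mul_assoc, Matrix.nonsing_inv_mul _ hBu, Matrix.one_mul]
    have h2 : D * canX n m₁ = canX n m₁ := by
      ext i j
      rw [hD, Matrix.diagonal_mul]
      by_cases hij : (i : ℕ) = (j : ℕ)
      · have hjlt : (j : ℕ) < m₁ := j.2
        have hine : ¬ ((i : ℕ) = n - 1) := by omega
        simp [hd, canX, hine]
      · simp [canX, hij]
    rw [Matrix.mul_assoc, Matrix.mul_assoc, h1, h2, hB'1]
  have hsnd : dualMat g * y = y' := by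
    have hGinv : (B' * D * B⁻¹)⁻¹ = B * D' * B'⁻¹ := by
      apply Matrix.inv_eq_right_inv
      calc (B' * D * B⁻¹) * (B * D' * B'⁻¹)
          = B' * (D * (B⁻¹ * (B * (D' * B'⁻¹)))) := by
            simp only [Matrix.mul_assoc]
        _ = B' * (D * (D' * B'⁻¹)) := by
            rw [← Matrix.mul_assoc B⁻¹ B (D' * B'⁻¹), Matrix.nonsing_inv_mul _ hBu,
              Matrix.one_mul]
        _ = B' * ((D * D') * B'⁻¹) := by rw [← Matrix.mul_assoc D D' B'⁻¹]
        _ = B' * B'⁻¹ := by rw [hDD', Matrix.one_mul]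
        _ = 1 := Matrix.mul_nonsing_inv _ hB'u
    have hadj : Matrix.adjugate (B' * D * B⁻¹) = B * D' * B'⁻¹ := by
      have hinvadj : (B' * D * B⁻¹)⁻¹ = Matrix.adjugate (B' * D * B⁻¹) := by
        rw [Matrix.inv_def, hGdet, Ring.inverse_one, one_smul]
      rw [← hinvadj, hGinv]
    have hdual : dualMat g = (B * D' * B'⁻¹)ᵀ := by
      have h0 : ((g⁻¹ : SLR n) : Matrix (Fin n) (Fin n) ℝ) =
          Matrix.adjugate (B' * D * B⁻¹) := Matrix.SpecialLinearGroup.coe_inv g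
      show ((g⁻¹ : SLR n) : Matrix (Fin n) (Fin n) ℝ)ᵀ = (B * D' * B'⁻¹)ᵀ
      rw [h0, hadj]
    rw [hdual]
    have htr : (B * D' * B'⁻¹)ᵀ = (B'⁻¹)ᵀ * (D'ᵀ * Bᵀ) := by
      rw [Matrix.transpose_mul, Matrix.transpose_mul]
    have hD'tr : D'ᵀ = D' := by rw [hD', Matrix.diagonal_transpose]
    rw [htr, hD'tr, Matrix.mul_assoc, Matrix.mul_assoc, hB2]
    have h3 : D' * canY n m₁ m₂ β = canY n m₁ m₂ β := by
      ext i j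
      rw [hD', Matrix.diagonal_mul]
      by_cases hi : (i : ℕ) = n - 1
      · have hlt : ¬ ((i : ℕ) < m₁) := by omega
        have hne : ¬ ((i : ℕ) = m₁ + (j : ℕ)) := by have := j.2; omega
        simp [canY, hlt, hne]
      · simp [hd', hi]
    rw [h3, ← hB'2, ← Matrix.mul_assoc, ← Matrix.transpose_mul,
      Matrix.mul_nonsing_inv _ hB'u, Matrix.transpose_one, Matrix.one_mul]
  rw [Prod.mk.injEq]
  exact ⟨hfst, hsnd⟩

end Paper
end
end

section
/- Let m₁, m₂ be positive integers with m₁ + m₂ < n and let β ∈ M_{m₁,m₂}(ℤ). Then W(γ₁βγ₂) = W(β) for all γ₁ ∈ GL_{m₁}(ℤ) and γ₂ ∈ GL_{m₂}(ℤ). -/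
/- Common setup: the space `X_n = SL_n(ℝ)/SL_n(ℤ)` of unimodular lattices in `ℝⁿ`,
rank conditions, the sets `A_{k,m}` of representatives, the weights `W(β)`,
and the measures `η_β` on the submanifolds `S(β)`. -/

noncomputable section
open MeasureTheory Matrix Filter Topology
open scoped ENNReal Classical

namespace Paper

namespace HNF
variable {m : ℕ}

lemma herm_det_pos {A : Matrix (Fin m) (Fin m) ℤ} (hA : A ∈ HermiteSet m) : 0 < A.det := by
  rw [Matrix.det_of_upperTriangular (fun i j (h : (id j : Fin m) < id i) => hA.1 i j h)]
  exact Finset.prod_pos fun i _ => hA.2.1 i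

def red (w : Fin m → Fin m → ℤ) (g : Fin m → ℤ) : ℕ → ℕ → (Fin m → ℤ) → (Fin m → ℤ)
  | 0, _, v => v
  | fuel+1, p, v =>
    if h : p < m then red w g fuel (p+1) (v - (v ⟨p,h⟩ / g ⟨p,h⟩) • w ⟨p,h⟩) else v

lemma red_mem (w : Fin m → Fin m → ℤ) (g : Fin m → ℤ) (L : Submodule ℤ (Fin m → ℤ))
    (hw : ∀ q, w q ∈ L) : ∀ fuel p v, v ∈ L → red w g fuel p v ∈ L := by
  intro fuel
  induction fuel with
  | zero => intro p v hv; exact hv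
  | succ n ih =>
    intro p v hv
    rw [red]
    split
    · exact ih _ _ (L.sub_mem hv (L.smul_mem _ (hw _)))
    · exact hv

lemma red_lt (w : Fin m → Fin m → ℤ) (g : Fin m → ℤ)
    (hw0 : ∀ q k : Fin m, (k:ℕ) < (q:ℕ) → w q k = 0) :
    ∀ fuel p v (k : Fin m), (k:ℕ) < p → red w g fuel p v k = v k := by
  intro fuel
  induction fuel with
  | zero => intro p v k _; rfl
  | succ n ih =>
    intro p v k hk
    rw [red]
    split
    · rename_i h
      rw [ih (p+1) _ k (by omega)]
      simp [hw0 ⟨p,h⟩ k hk]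
    · rfl

lemma red_range (w : Fin m → Fin m → ℤ) (g : Fin m → ℤ)
    (hw0 : ∀ q k : Fin m, (k:ℕ) < (q:ℕ) → w q k = 0)
    (hwg : ∀ q, w q q = g q) (hg : ∀ q, 0 < g q) :
    ∀ fuel p v (j : Fin m), p ≤ (j:ℕ) → (j:ℕ) < p + fuel →
      0 ≤ red w g fuel p v j ∧ red w g fuel p v j < g j := by
  intro fuel
  induction fuel with
  | zero => intro p v j h1 h2; omega
  | succ n ih =>
    intro p v j h1 h2
    have hp : p < m := lt_of_le_of_lt h1 j.isLt
    rw [red, dif_pos hp]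
    rcases eq_or_lt_of_le h1 with heq | hlt
    · have hj : j = ⟨p, hp⟩ := Fin.ext heq.symm
      subst hj
      rw [red_lt w g hw0 n (p+1) _ _ (by omega)]
      have : (v - (v ⟨p,hp⟩ / g ⟨p,hp⟩) • w ⟨p,hp⟩) ⟨p,hp⟩ = v ⟨p,hp⟩ % g ⟨p,hp⟩ := by
        simp only [Pi.sub_apply, Pi.smul_apply, smul_eq_mul, hwg ⟨p,hp⟩]
        rw [Int.emod_def]; ring
      rw [this]
      exact ⟨Int.emod_nonneg _ (ne_of_gt (hg _)), Int.emod_lt_of_pos _ (hg _)⟩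
    · exact ih (p+1) _ j hlt (by omega)

lemma mul_right_cancel_det {X Y A : Matrix (Fin m) (Fin m) ℤ} (hA : A.det ≠ 0)
    (h : X * A = Y * A) : X = Y := by
  have hmap : ∀ Z W : Matrix (Fin m) (Fin m) ℤ,
      (Z * W).map ((↑) : ℤ → ℚ) = Z.map (↑) * W.map (↑) := fun Z W =>
    Matrix.map_mul (f := Int.castRingHom ℚ)
  have hdet : IsUnit ((A.map ((↑) : ℤ → ℚ)).det) := by
    have h1 : (A.map ((↑) : ℤ → ℚ)).det = ((A.det : ℤ) : ℚ) :=
      (RingHom.map_det (Int.castRingHom ℚ) A).symm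
    rw [isUnit_iff_ne_zero, h1]
    exact_mod_cast hA
  have hq : X.map ((↑) : ℤ → ℚ) * A.map (↑) = Y.map (↑) * A.map (↑) := by
    rw [← hmap, ← hmap, h]
  have := congrArg (fun Z => Z * (A.map ((↑) : ℤ → ℚ))⁻¹) hq
  simp only [Matrix.mul_nonsing_inv_cancel_right _ _ hdet] at this
  ext i j
  have h2 := congrFun (congrFun this i) j
  simpa using h2

theorem exists_hermite (M : Matrix (Fin m) (Fin m) ℤ) (hM : M.det ≠ 0) :
    ∃ A ∈ HermiteSet m, ∃ U : (Matrix (Fin m) (Fin m) ℤ)ˣ, (↑U : Matrix (Fin m) (Fin m) ℤ) * M = A := by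
  classical
  set L : Submodule ℤ (Fin m → ℤ) := Submodule.span ℤ (Set.range (fun i => M i)) with hL
  have hdin : ∀ i : Fin m, (fun j => (M.det • (1 : Matrix (Fin m) (Fin m) ℤ)) i j) ∈ L := by
    intro i
    rw [hL, Submodule.mem_span_range_iff_exists_fun]
    refine ⟨fun k => M.adjugate i k, ?_⟩
    funext j
    have := congrFun (congrFun (Matrix.adjugate_mul M) i) j
    simpa [Matrix.mul_apply, Finset.sum_apply] using this
  have Ssg : ∀ i : Fin m, ∃ S : AddSubgroup ℤ, ∀ t : ℤ,
      t ∈ S ↔ ∃ v ∈ L, (∀ k : Fin m, (k:ℕ) < (i:ℕ) → v k = 0) ∧ v i = t := by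
    intro i
    refine ⟨{ carrier := {t | ∃ v ∈ L, (∀ k : Fin m, (k:ℕ) < (i:ℕ) → v k = 0) ∧ v i = t}
              zero_mem' := ⟨0, L.zero_mem, fun k _ => rfl, rfl⟩
              add_mem' := ?_
              neg_mem' := ?_ }, fun t => Iff.rfl⟩
    · rintro a b ⟨v, hv, hv0, rfl⟩ ⟨u, hu, hu0, rfl⟩
      exact ⟨v + u, L.add_mem hv hu, fun k hk => by simp [hv0 k hk, hu0 k hk], rfl⟩
    · rintro a ⟨v, hv, hv0, rfl⟩
      exact ⟨-v, L.neg_mem hv, fun k hk => by simp [hv0 k hk], rfl⟩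
  choose S hS using Ssg
  choose a ha using fun i => Int.subgroup_cyclic (S i)
  have hmemS : ∀ i (t : ℤ), t ∈ S i ↔ ∃ n : ℤ, n • a i = t := by
    intro i t; rw [ha i]; exact AddSubgroup.mem_closure_singleton
  have hdS : ∀ i : Fin m, M.det ∈ S i := by
    intro i
    rw [hS]
    refine ⟨_, hdin i, fun k hk => ?_, ?_⟩
    · have hne' : i ≠ k := fun h => by subst h; omega
      simp [Matrix.one_apply, hne']
    · simp [Matrix.one_apply]
  have hane : ∀ i, a i ≠ 0 := by
    intro i h
    rcases (hmemS i M.det).1 (hdS i) with ⟨n, hn⟩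
    rw [h] at hn; simp at hn; exact hM hn.symm
  have haS : ∀ i, a i ∈ S i := fun i => by
    rw [hmemS]; exact ⟨1, one_smul _ _⟩
  set g : Fin m → ℤ := fun i => |a i| with hgdef
  have hg : ∀ i, 0 < g i := fun i => abs_pos.2 (hane i)
  have hgS : ∀ i, g i ∈ S i := by
    intro i
    show |a i| ∈ S i
    rcases abs_choice (a i) with h | h
    · rw [h]; exact haS i
    · rw [h]; exact (S i).neg_mem (haS i)
  have hw : ∀ i : Fin m, ∃ v ∈ L, (∀ k : Fin m, (k:ℕ) < (i:ℕ) → v k = 0) ∧ v i = g i :=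
    fun i => (hS i (g i)).1 (hgS i)
  choose w hwL hw0 hwg using hw
  have hdvd : ∀ (i : Fin m) (v : Fin m → ℤ), v ∈ L → (∀ k : Fin m, (k:ℕ) < (i:ℕ) → v k = 0) →
      g i ∣ v i := by
    intro i v hv hv0
    have hvS : v i ∈ S i := (hS i _).2 ⟨v, hv, hv0, rfl⟩
    rcases (hmemS i _).1 hvS with ⟨n, hn⟩
    refine (abs_dvd _ _).2 ⟨n, ?_⟩
    rw [← hn, smul_eq_mul, mul_comm]
  set r : Fin m → (Fin m → ℤ) := fun i => red w g (m - ((i:ℕ)+1)) ((i:ℕ)+1) (w i) with hrdef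
  have hw0' : ∀ q k : Fin m, (k:ℕ) < (q:ℕ) → w q k = 0 := hw0
  have hrL : ∀ i, r i ∈ L := fun i => red_mem w g L hwL _ _ _ (hwL i)
  have hrlow : ∀ i k : Fin m, (k:ℕ) < (i:ℕ) → r i k = 0 := by
    intro i k hk
    show red w g (m - ((i:ℕ)+1)) ((i:ℕ)+1) (w i) k = 0
    rw [red_lt w g hw0' _ _ _ k (by omega)]
    exact hw0 i k hk
  have hrdiag : ∀ i, r i i = g i := by
    intro i
    show red w g (m - ((i:ℕ)+1)) ((i:ℕ)+1) (w i) i = g i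
    rw [red_lt w g hw0' _ _ _ i (by omega)]
    exact hwg i
  have hrhigh : ∀ i j : Fin m, (i:ℕ) < (j:ℕ) → 0 ≤ r i j ∧ r i j < g j := by
    intro i j hij
    refine red_range w g hw0' hwg hg _ _ _ j (by omega) ?_
    have h1 := j.isLt
    have h2 := i.isLt
    omega
  set A : Matrix (Fin m) (Fin m) ℤ := Matrix.of r with hAdef
  have hAherm : A ∈ HermiteSet m := by
    refine ⟨fun i j h => hrlow i j h, fun i => ?_, fun i j h => ?_⟩
    · show 0 < r i i; rw [hrdiag]; exact hg i
    · have h2 := hrhigh i j h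
      exact ⟨h2.1, show r i j < r j j from (hrdiag j).symm ▸ h2.2⟩
  have hspan1 : Submodule.span ℤ (Set.range r) ≤ L :=
    Submodule.span_le.2 (by rintro v ⟨i, rfl⟩; exact hrL i)
  have descend : ∀ t i : ℕ, m ≤ i + t → ∀ v, v ∈ L → (∀ k : Fin m, (k:ℕ) < i → v k = 0) →
      v ∈ Submodule.span ℤ (Set.range r) := by
    intro t
    induction t with
    | zero =>
      intro i hi v _ hv0
      have : v = 0 := funext fun k => hv0 k (lt_of_lt_of_le k.isLt (by omega))
      rw [this]; exact Submodule.zero_mem _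
    | succ n ih =>
      intro i hi v hv hv0
      by_cases him : i < m
      · set i' : Fin m := ⟨i, him⟩
        have hdv : g i' ∣ v i' := hdvd i' v hv hv0
        set q := v i' / g i' with hq
        have hv' : v - q • r i' ∈ L := L.sub_mem hv (L.smul_mem _ (hrL i'))
        have hv'0 : ∀ k : Fin m, (k:ℕ) < i + 1 → (v - q • r i') k = 0 := by
          intro k hk
          rcases Nat.lt_or_ge (k:ℕ) i with h | h
          · simp [hv0 k h, hrlow i' k h]
          · have hki0 : (k:ℕ) = i := by omega
            have hki : k = i' := Fin.ext (by rw [hki0])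
            subst hki
            simp only [Pi.sub_apply, Pi.smul_apply, smul_eq_mul, hrdiag i', hq]
            rw [Int.ediv_mul_cancel hdv]; ring
        have hmem := ih (i+1) (by omega) _ hv' hv'0
        have hri : r i' ∈ Submodule.span ℤ (Set.range r) :=
          Submodule.subset_span ⟨i', rfl⟩
        have hadd : (v - q • r i') + q • r i' ∈ Submodule.span ℤ (Set.range r) :=
          Submodule.add_mem _ hmem (Submodule.smul_mem _ _ hri)
        simpa using hadd
      · have : v = 0 := funext fun k => hv0 k (lt_of_lt_of_le k.isLt (by omega))
        rw [this]; exact Submodule.zero_mem _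
  have hspan2 : L ≤ Submodule.span ℤ (Set.range r) := by
    rw [hL, Submodule.span_le]
    rintro v ⟨i, rfl⟩
    exact descend m 0 (by omega) _ (Submodule.subset_span ⟨i, rfl⟩) (fun k hk => by omega)
  have hPex : ∀ i, ∃ c : Fin m → ℤ, ∑ k, c k • M k = r i := by
    intro i
    have hh := hspan1 (Submodule.subset_span ⟨i, rfl⟩)
    rwa [hL, Submodule.mem_span_range_iff_exists_fun] at hh
  have hQex : ∀ i, ∃ c : Fin m → ℤ, ∑ k, c k • r k = M i := by
    intro i
    have hh := hspan2 (Submodule.subset_span (Set.mem_range_self i))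
    rwa [Submodule.mem_span_range_iff_exists_fun] at hh
  choose P hP using hPex
  choose Q hQ using hQex
  set Pm : Matrix (Fin m) (Fin m) ℤ := Matrix.of P with hPm
  set Qm : Matrix (Fin m) (Fin m) ℤ := Matrix.of Q with hQm
  have hPM : Pm * M = A := by
    ext i j
    have hh := congrFun (hP i) j
    simpa [Matrix.mul_apply, Finset.sum_apply, hPm, hAdef] using hh
  have hQA : Qm * A = M := by
    ext i j
    have hh := congrFun (hQ i) j
    simpa [Matrix.mul_apply, Finset.sum_apply, hQm, hAdef] using hh
  have hdetA : A.det ≠ 0 := ne_of_gt (herm_det_pos hAherm)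
  have hPQ : Pm * Qm = 1 := by
    apply mul_right_cancel_det hdetA
    rw [Matrix.mul_assoc, hQA, hPM, Matrix.one_mul]
  have hQP : Qm * Pm = 1 := by
    apply mul_right_cancel_det hM
    rw [Matrix.mul_assoc, hPM, hQA, Matrix.one_mul]
  exact ⟨A, hAherm, ⟨Pm, Qm, hPQ, hQP⟩, hPM⟩


lemma lower_zero {A Z C : Matrix (Fin m) (Fin m) ℤ} (hA : A ∈ HermiteSet m)
    (h : Z * A = C) (hC : ∀ i j : Fin m, j < i → C i j = 0) :
    ∀ j i : Fin m, j < i → Z i j = 0 := by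
  have key : ∀ n : ℕ, ∀ j i : Fin m, (j:ℕ) < n → j < i → Z i j = 0 := by
    intro n
    induction n with
    | zero => intro j i h0 _; omega
    | succ n ih =>
      intro j i hjn hji
      rcases Nat.lt_or_ge (j:ℕ) n with h1 | h1
      · exact ih j i h1 hji
      · have hsum : C i j = ∑ k, Z i k * A k j := by rw [← h]; rfl
        rw [hC i j hji] at hsum
        have hsingle : ∑ k, Z i k * A k j = Z i j * A j j := by
          apply Finset.sum_eq_single j
          · intro k _ hk
            rcases lt_or_gt_of_ne hk with hlt | hgt
            · have hkv : (k:ℕ) < (j:ℕ) := hlt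
              rw [ih k i (by omega) (lt_trans hlt hji)]; ring
            · rw [hA.1 k j hgt]; ring
          · intro hj; exact absurd (Finset.mem_univ j) hj
        rw [hsingle] at hsum
        have hpos := hA.2.1 j
        rcases mul_eq_zero.1 hsum.symm with h2 | h2
        · exact h2
        · omega
  intro j i hji; exact key ((j:ℕ)+1) j i (by omega) hji

theorem hermite_unique {A B : Matrix (Fin m) (Fin m) ℤ}
    (hA : A ∈ HermiteSet m) (hB : B ∈ HermiteSet m)
    (U : (Matrix (Fin m) (Fin m) ℤ)ˣ) (hUA : (↑U : Matrix (Fin m) (Fin m) ℤ) * A = B) :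
    A = B := by
  have hVB : (↑U⁻¹ : Matrix (Fin m) (Fin m) ℤ) * B = A := by
    rw [← hUA, ← Matrix.mul_assoc]
    simp
  have hUlow : ∀ j i : Fin m, j < i → (↑U : Matrix (Fin m) (Fin m) ℤ) i j = 0 :=
    lower_zero hA hUA hB.1
  have hVlow : ∀ j i : Fin m, j < i → (↑U⁻¹ : Matrix (Fin m) (Fin m) ℤ) i j = 0 :=
    lower_zero hB hVB hA.1
  have hUV : (↑U : Matrix (Fin m) (Fin m) ℤ) * (↑U⁻¹ : Matrix (Fin m) (Fin m) ℤ) = 1 := U.mul_inv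
  have hdiag1 : ∀ i : Fin m,
      (↑U : Matrix (Fin m) (Fin m) ℤ) i i * (↑U⁻¹ : Matrix (Fin m) (Fin m) ℤ) i i = 1 := by
    intro i
    have h1 : (1 : Matrix (Fin m) (Fin m) ℤ) i i
        = ∑ k, (↑U : Matrix (Fin m) (Fin m) ℤ) i k * (↑U⁻¹ : Matrix (Fin m) (Fin m) ℤ) k i := by
      rw [← hUV]; rfl
    have h2 : ∑ k, (↑U : Matrix (Fin m) (Fin m) ℤ) i k * (↑U⁻¹ : Matrix (Fin m) (Fin m) ℤ) k i
        = (↑U : Matrix (Fin m) (Fin m) ℤ) i i * (↑U⁻¹ : Matrix (Fin m) (Fin m) ℤ) i i := by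
      apply Finset.sum_eq_single i
      · intro k _ hk
        rcases lt_or_gt_of_ne hk with hlt | hgt
        · rw [hUlow k i hlt]; ring
        · rw [hVlow i k hgt]; ring
      · intro hi; exact absurd (Finset.mem_univ i) hi
    rw [← h2, ← h1]
    exact Matrix.one_apply_eq i
  have hBdiag : ∀ i : Fin m, B i i = (↑U : Matrix (Fin m) (Fin m) ℤ) i i * A i i := by
    intro i
    have h1 : B i i = ∑ k, (↑U : Matrix (Fin m) (Fin m) ℤ) i k * A k i := by
      rw [← hUA]; rfl
    rw [h1]
    apply Finset.sum_eq_single i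
    · intro k _ hk
      rcases lt_or_gt_of_ne hk with hlt | hgt
      · rw [hUlow k i hlt]; ring
      · rw [hA.1 k i hgt]; ring
    · intro hi; exact absurd (Finset.mem_univ i) hi
  have hUii : ∀ i : Fin m, (↑U : Matrix (Fin m) (Fin m) ℤ) i i = 1 := by
    intro i
    rcases Int.eq_one_or_neg_one_of_mul_eq_one (hdiag1 i) with h | h
    · exact h
    · exfalso
      have h1 := hBdiag i
      have h2 := hA.2.1 i
      have h3 := hB.2.1 i
      rw [h] at h1
      omega
  have hdiagAB : ∀ i : Fin m, B i i = A i i := by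
    intro i; rw [hBdiag i, hUii i, one_mul]
  have main : ∀ d : ℕ, ∀ i j : Fin m, i < j → (j:ℕ) ≤ (i:ℕ) + d →
      (↑U : Matrix (Fin m) (Fin m) ℤ) i j = 0 ∧ B i j = A i j := by
    intro d
    induction d with
    | zero =>
      intro i j hij hd
      have : (i:ℕ) < (j:ℕ) := hij
      omega
    | succ d ih =>
      intro i j hij hd
      have h1 : B i j = ∑ k, (↑U : Matrix (Fin m) (Fin m) ℤ) i k * A k j := by
        rw [← hUA]; rfl
      have h2 : ∑ k, (↑U : Matrix (Fin m) (Fin m) ℤ) i k * A k j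
          = (↑U : Matrix (Fin m) (Fin m) ℤ) i i * A i j
            + (↑U : Matrix (Fin m) (Fin m) ℤ) i j * A j j := by
        apply Finset.sum_eq_add_of_mem i j (Finset.mem_univ i) (Finset.mem_univ j) (ne_of_lt hij)
        intro k _ hk
        rcases lt_or_gt_of_ne hk.1 with hlt | hgt
        · rw [hUlow k i hlt]; ring
        · rcases lt_or_gt_of_ne hk.2 with hlt2 | hgt2
          · have hik : (i:ℕ) < (k:ℕ) := hgt
            have hkj : (k:ℕ) < (j:ℕ) := hlt2
            rw [(ih i k hgt (by omega)).1]; ring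
          · rw [hA.1 k j hgt2]; ring
      rw [h2, hUii i, one_mul] at h1
      have hBb := hB.2.2 i j hij
      have hAb := hA.2.2 i j hij
      have hBjj := hdiagAB j
      set u := (↑U : Matrix (Fin m) (Fin m) ℤ) i j with hu
      have hu0 : u = 0 := by
        rcases lt_trichotomy u 0 with h | h | h
        · nlinarith [hA.2.1 j]
        · exact h
        · nlinarith [hA.2.1 j]
      refine ⟨hu0, ?_⟩
      rw [hu0] at h1
      omega
  ext i j
  rcases lt_trichotomy i j with h | h | h
  · exact ((main ((j:ℕ)) i j h (by omega)).2).symm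
  · subst h; exact (hdiagAB i).symm
  · rw [hA.1 i j h, hB.1 i j h]

noncomputable def hnf (M : Matrix (Fin m) (Fin m) ℤ) : Matrix (Fin m) (Fin m) ℤ :=
  if h : M.det ≠ 0 then (exists_hermite M h).choose else M

lemma hnf_spec {M : Matrix (Fin m) (Fin m) ℤ} (h : M.det ≠ 0) :
    hnf M ∈ HermiteSet m ∧ ∃ U : (Matrix (Fin m) (Fin m) ℤ)ˣ,
      (↑U : Matrix (Fin m) (Fin m) ℤ) * M = hnf M := by
  rw [hnf, dif_pos h]
  exact ⟨(exists_hermite M h).choose_spec.1, (exists_hermite M h).choose_spec.2⟩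

lemma unit_det_ne_zero (U : (Matrix (Fin m) (Fin m) ℤ)ˣ) :
    (↑U : Matrix (Fin m) (Fin m) ℤ).det ≠ 0 := by
  have : IsUnit (↑U : Matrix (Fin m) (Fin m) ℤ).det :=
    (Matrix.isUnit_iff_isUnit_det _).1 U.isUnit
  rcases Int.isUnit_iff.1 this with h | h <;> simp [h]

lemma unit_det_abs (U : (Matrix (Fin m) (Fin m) ℤ)ˣ) :
    (↑U : Matrix (Fin m) (Fin m) ℤ).det = 1 ∨ (↑U : Matrix (Fin m) (Fin m) ℤ).det = -1 :=
  Int.isUnit_iff.1 ((Matrix.isUnit_iff_isUnit_det _).1 U.isUnit)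

lemma hnf_unit_mul {A : Matrix (Fin m) (Fin m) ℤ} (hA : A ∈ HermiteSet m)
    (U : (Matrix (Fin m) (Fin m) ℤ)ˣ) :
    hnf ((↑U : Matrix (Fin m) (Fin m) ℤ) * A) = A := by
  have hdet : ((↑U : Matrix (Fin m) (Fin m) ℤ) * A).det ≠ 0 := by
    rw [Matrix.det_mul]
    exact mul_ne_zero (unit_det_ne_zero U) (ne_of_gt (herm_det_pos hA))
  obtain ⟨hmem, U', hU'⟩ := hnf_spec hdet
  rw [← Matrix.mul_assoc] at hU'
  exact (hermite_unique hA hmem (U' * U) (by rw [Units.val_mul]; exact hU')).symm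

/-- transpose of a unit as a unit -/
def tUnit (γ : (Matrix (Fin m) (Fin m) ℤ)ˣ) : (Matrix (Fin m) (Fin m) ℤ)ˣ where
  val := (↑γ : Matrix (Fin m) (Fin m) ℤ)ᵀ
  inv := (↑γ⁻¹ : Matrix (Fin m) (Fin m) ℤ)ᵀ
  val_inv := by rw [← Matrix.transpose_mul, γ.inv_mul, Matrix.transpose_one]
  inv_val := by rw [← Matrix.transpose_mul, γ.mul_inv, Matrix.transpose_one]

lemma hnf_mul_tunit_det {A : Matrix (Fin m) (Fin m) ℤ} (hA : A ∈ HermiteSet m)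
    (σ : (Matrix (Fin m) (Fin m) ℤ)ˣ) :
    (hnf (A * (↑σ : Matrix (Fin m) (Fin m) ℤ))).det = A.det ∧ hnf (A * (↑σ : Matrix (Fin m) (Fin m) ℤ)) ∈ HermiteSet m ∧
      ∃ U : (Matrix (Fin m) (Fin m) ℤ)ˣ, (↑U : Matrix (Fin m) (Fin m) ℤ) * (A * (↑σ : Matrix (Fin m) (Fin m) ℤ)) = hnf (A * (↑σ : Matrix (Fin m) (Fin m) ℤ)) := by
  have hdet : (A * (↑σ : Matrix (Fin m) (Fin m) ℤ)).det ≠ 0 := by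
    rw [Matrix.det_mul]
    exact mul_ne_zero (ne_of_gt (herm_det_pos hA)) (unit_det_ne_zero σ)
  obtain ⟨hmem, U, hU⟩ := hnf_spec hdet
  refine ⟨?_, hmem, U, hU⟩
  have hdeteq : (hnf (A * (↑σ : Matrix (Fin m) (Fin m) ℤ))).det
      = (↑U : Matrix (Fin m) (Fin m) ℤ).det * (A.det * (↑σ : Matrix (Fin m) (Fin m) ℤ).det) := by
    rw [← hU, Matrix.det_mul, Matrix.det_mul]
  have h1 := herm_det_pos hA
  have h2 := herm_det_pos hmem
  rcases unit_det_abs U with hu | hu <;> rcases unit_det_abs σ with hs | hs <;>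
    rw [hu, hs] at hdeteq <;> omega


end HNF

section Weight
open HNF
variable {n m₁ m₂ : ℕ}

/-- membership transport for the hnf-twist map -/
lemma key_mem (γ : (Matrix (Fin m₁) (Fin m₁) ℤ)ˣ) (β : Matrix (Fin m₁) (Fin m₂) ℤ)
    (A : Matrix (Fin m₁) (Fin m₁) ℤ)
    (hA : A ∈ WSet m₁ m₂ ((↑γ : Matrix (Fin m₁) (Fin m₁) ℤ) * β)) :
    hnf (A * (↑(tUnit γ⁻¹) : Matrix (Fin m₁) (Fin m₁) ℤ)) ∈ WSet m₁ m₂ β := by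
  obtain ⟨hAh, C, hC⟩ := hA
  obtain ⟨hdet, hmem, U, hU⟩ := hnf_mul_tunit_det hAh (tUnit γ⁻¹)
  refine ⟨hmem, (↑U⁻¹ : Matrix (Fin m₁) (Fin m₁) ℤ)ᵀ * C, ?_⟩
  rw [← hU]
  have htu : (↑(tUnit γ⁻¹) : Matrix (Fin m₁) (Fin m₁) ℤ)ᵀ = (↑γ⁻¹ : Matrix (Fin m₁) (Fin m₁) ℤ) := by
    show ((↑γ⁻¹ : Matrix (Fin m₁) (Fin m₁) ℤ)ᵀ)ᵀ = _
    rw [Matrix.transpose_transpose]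
  rw [Matrix.transpose_mul, Matrix.transpose_mul, htu]
  calc (↑γ⁻¹ : Matrix (Fin m₁) (Fin m₁) ℤ) * Aᵀ * (↑U : Matrix (Fin m₁) (Fin m₁) ℤ)ᵀ *
        ((↑U⁻¹ : Matrix (Fin m₁) (Fin m₁) ℤ)ᵀ * C)
      = (↑γ⁻¹ : Matrix (Fin m₁) (Fin m₁) ℤ) * Aᵀ *
        (((↑U⁻¹ : Matrix (Fin m₁) (Fin m₁) ℤ) * ↑U)ᵀ * C) := by
        rw [Matrix.transpose_mul]; simp only [Matrix.mul_assoc]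
    _ = (↑γ⁻¹ : Matrix (Fin m₁) (Fin m₁) ℤ) * (Aᵀ * C) := by
        rw [U.inv_mul, Matrix.transpose_one, Matrix.one_mul, Matrix.mul_assoc]
    _ = β := by
        rw [hC, ← Matrix.mul_assoc, Units.inv_mul, Matrix.one_mul]


lemma tUnit_inv (γ : (Matrix (Fin m₁) (Fin m₁) ℤ)ˣ) : (tUnit γ)⁻¹ = tUnit γ⁻¹ := by
  ext
  rfl

lemma hnf_roundtrip {A : Matrix (Fin m₁) (Fin m₁) ℤ} (hA : A ∈ HermiteSet m₁)
    (σ : (Matrix (Fin m₁) (Fin m₁) ℤ)ˣ) :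
    hnf (hnf (A * (↑σ : Matrix (Fin m₁) (Fin m₁) ℤ)) * (↑σ⁻¹ : Matrix (Fin m₁) (Fin m₁) ℤ)) = A := by
  obtain ⟨hdet, hmem, U, hU⟩ := hnf_mul_tunit_det hA σ
  rw [← hU]
  have h1 : ((↑U : Matrix (Fin m₁) (Fin m₁) ℤ) * (A * (↑σ : Matrix (Fin m₁) (Fin m₁) ℤ))) *
      (↑σ⁻¹ : Matrix (Fin m₁) (Fin m₁) ℤ) = (↑U : Matrix (Fin m₁) (Fin m₁) ℤ) * A := by
    rw [Matrix.mul_assoc, Matrix.mul_assoc, σ.mul_inv, Matrix.mul_one]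
  rw [h1, hnf_unit_mul hA U]


lemma weight_left (n : ℕ) (β : Matrix (Fin m₁) (Fin m₂) ℤ) (γ : (Matrix (Fin m₁) (Fin m₁) ℤ)ˣ) :
    WeightW n m₁ m₂ ((↑γ : Matrix (Fin m₁) (Fin m₁) ℤ) * β) = WeightW n m₁ m₂ β := by
  have hinvmem : ∀ A : Matrix (Fin m₁) (Fin m₁) ℤ, A ∈ WSet m₁ m₂ β →
      hnf (A * (↑(tUnit γ) : Matrix (Fin m₁) (Fin m₁) ℤ)) ∈
        WSet m₁ m₂ ((↑γ : Matrix (Fin m₁) (Fin m₁) ℤ) * β) := by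
    intro A hA
    have h0 : A ∈ WSet m₁ m₂ ((↑γ⁻¹ : Matrix (Fin m₁) (Fin m₁) ℤ) *
        ((↑γ : Matrix (Fin m₁) (Fin m₁) ℤ) * β)) := by
      rw [← Matrix.mul_assoc, Units.inv_mul, Matrix.one_mul]; exact hA
    have h1 := key_mem γ⁻¹ ((↑γ : Matrix (Fin m₁) (Fin m₁) ℤ) * β) A h0
    rwa [inv_inv] at h1
  let e : ↥(WSet m₁ m₂ ((↑γ : Matrix (Fin m₁) (Fin m₁) ℤ) * β)) ≃ ↥(WSet m₁ m₂ β) :=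
    { toFun := fun A => ⟨hnf (A.1 * (↑(tUnit γ⁻¹) : Matrix (Fin m₁) (Fin m₁) ℤ)),
        key_mem γ β A.1 A.2⟩
      invFun := fun A => ⟨hnf (A.1 * (↑(tUnit γ) : Matrix (Fin m₁) (Fin m₁) ℤ)),
        hinvmem A.1 A.2⟩
      left_inv := by
        rintro ⟨A, hA⟩
        apply Subtype.ext
        show hnf (hnf (A * (↑(tUnit γ⁻¹) : Matrix (Fin m₁) (Fin m₁) ℤ)) *
          (↑(tUnit γ) : Matrix (Fin m₁) (Fin m₁) ℤ)) = A
        have h2 := hnf_roundtrip hA.1 (tUnit γ⁻¹)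
        rwa [tUnit_inv, inv_inv] at h2
      right_inv := by
        rintro ⟨A, hA⟩
        apply Subtype.ext
        show hnf (hnf (A * (↑(tUnit γ) : Matrix (Fin m₁) (Fin m₁) ℤ)) *
          (↑(tUnit γ⁻¹) : Matrix (Fin m₁) (Fin m₁) ℤ)) = A
        have h2 := hnf_roundtrip hA.1 (tUnit γ)
        rwa [tUnit_inv] at h2 }
  unfold WeightW
  congr 1
  have h3 := Equiv.tsum_eq e (fun B : ↥(WSet m₁ m₂ β) => ((B.1.det : ℝ) ^ ((m₂ : ℤ) - n)))
  rw [← h3]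
  apply tsum_congr
  intro A
  have hdet := (hnf_mul_tunit_det A.2.1 (tUnit γ⁻¹)).1
  show ((A.1.det : ℝ) ^ ((m₂ : ℤ) - n)) = (((e A).1.det : ℝ) ^ ((m₂ : ℤ) - n))
  have h4 : (e A).1 = hnf (A.1 * (↑(tUnit γ⁻¹) : Matrix (Fin m₁) (Fin m₁) ℤ)) := rfl
  rw [h4, hdet]

lemma weight_congr {n : ℕ} {β₁ β₂ : Matrix (Fin m₁) (Fin m₂) ℤ}
    (h : WSet m₁ m₂ β₁ = WSet m₁ m₂ β₂) : WeightW n m₁ m₂ β₁ = WeightW n m₁ m₂ β₂ := by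
  unfold WeightW
  rw [h]


/-- **Lemma `Winvlem`**: for positive integers `m₁, m₂` with `m₁ + m₂ < n` and any
`β ∈ M_{m₁,m₂}(ℤ)`, the weight satisfies `W(γ₁βγ₂) = W(β)` for all `γ₁ ∈ GL_{m₁}(ℤ)` and
`γ₂ ∈ GL_{m₂}(ℤ)`. -/
theorem weight_W_GL_invariant
    (n m₁ m₂ : ℕ) (hm₁ : 0 < m₁) (hm₂ : 0 < m₂) (hn : m₁ + m₂ < n)
    (β : Matrix (Fin m₁) (Fin m₂) ℤ)
    (γ₁ : (Matrix (Fin m₁) (Fin m₁) ℤ)ˣ) (γ₂ : (Matrix (Fin m₂) (Fin m₂) ℤ)ˣ) :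
    WeightW n m₁ m₂
        ((γ₁ : Matrix (Fin m₁) (Fin m₁) ℤ) * β * (γ₂ : Matrix (Fin m₂) (Fin m₂) ℤ)) =
      WeightW n m₁ m₂ β := by

  have hset : WSet m₁ m₂ ((↑γ₁ : Matrix (Fin m₁) (Fin m₁) ℤ) * β *
      (↑γ₂ : Matrix (Fin m₂) (Fin m₂) ℤ)) = WSet m₁ m₂ ((↑γ₁ : Matrix (Fin m₁) (Fin m₁) ℤ) * β) := by
    ext A
    simp only [WSet, Set.mem_setOf_eq]
    constructor
    · rintro ⟨h1, C, hC⟩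
      refine ⟨h1, C * (↑γ₂⁻¹ : Matrix (Fin m₂) (Fin m₂) ℤ), ?_⟩
      rw [← Matrix.mul_assoc, hC, Matrix.mul_assoc, Units.mul_inv, Matrix.mul_one]
    · rintro ⟨h1, C, hC⟩
      exact ⟨h1, C * (↑γ₂ : Matrix (Fin m₂) (Fin m₂) ℤ), by rw [← Matrix.mul_assoc, hC]⟩
  rw [weight_congr hset, weight_left n β γ₁]

end Weight

end Paper
end
end
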